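/- arXiv:1908.03842 — 11 statements merged into one kernel-verified Lean document; each statement's English description precedes it below -/
import Mathlib

section
/- Let A be a unital *-algebra over ℂ represented faithfully on a nonzero Hilbert space (equivalently, a unital C*-algebra), and suppose {e_{x,a} : x ∈ I, a ∈ O} is a family of self-adjoint idempotents (projections) in A indexed by finite sets I, O, such that for every x ∈ I, ∑_{a ∈ O} e_{x,a} = 1, and e_{x,a} e_{y,a} = 0 whenever x ≠ y. Then |I| ≤ |O|. -/
/-!
Summing the `a`-th column gives `p a = ∑ x, e x a`, a sum of pairwise orthogonal projections and
hence a projection, so `‖p a‖ ≤ 1` by the C*-identity. Summing the rows instead gives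
`∑ a, p a = |I| • 1`, whose norm is `|I|`; the triangle inequality then yields `|I| ≤ |O|`.
-/

open Finset

theorem IsStarProjection.sum {R ι : Type*} [Ring R] [StarRing R] [Fintype ι] {p : ι → R}
    (hp : ∀ i, IsStarProjection (p i)) (horth : Pairwise fun i j => p i * p j = 0) :
    IsStarProjection (∑ i, p i) where
  isIdempotentElem := OrthogonalIdempotents.isIdempotentElem_sum ⟨fun i => (hp i).1, horth⟩
  isSelfAdjoint := isSelfAdjoint_sum _ fun i _ => (hp i).2

theorem natCast_le_card_of_sum_isStarProjection_eq {𝕜 A ι : Type*} [RCLike 𝕜] [NormedRing A]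
    [StarRing A] [CStarRing A] [NormedAlgebra 𝕜 A] [Nontrivial A] [Fintype ι] {p : ι → A}
    (hp : ∀ i, IsStarProjection (p i)) {n : ℕ} (hsum : ∑ i, p i = n) :
    n ≤ Fintype.card ι := by
  have hnorm : ‖(n : A)‖ = n := by
    rw [← map_natCast (algebraMap 𝕜 A), norm_algebraMap', RCLike.norm_natCast]
  suffices (n : ℝ) ≤ Fintype.card ι by exact_mod_cast this
  calc (n : ℝ) = ‖∑ i, p i‖ := by rw [hsum, hnorm]
    _ ≤ ∑ i, ‖p i‖ := norm_sum_le _ _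
    _ ≤ ∑ _i : ι, (1 : ℝ) := sum_le_sum fun i _ => (hp i).norm_le
    _ = Fintype.card ι := by simp

theorem card_inputs_le_card_outputs_general
    {A : Type*} [NormedRing A] [StarRing A] [CStarRing A] [NormedAlgebra ℂ A]
    [Nontrivial A]
    {I O : Type*} [Fintype I] [Fintype O]
    (e : I → O → A)
    (hidem : ∀ x a, e x a * e x a = e x a)
    (hsa : ∀ x a, star (e x a) = e x a)
    (hrow : ∀ x, ∑ a, e x a = 1)
    (hcol : ∀ x y a, x ≠ y → e x a * e y a = 0) :
    Fintype.card I ≤ Fintype.card O := by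
  have hcolumn : ∀ a, IsStarProjection (∑ x, e x a) := fun a =>
    IsStarProjection.sum (fun x => ⟨hidem x a, hsa x a⟩) fun x y hxy => hcol x y a hxy
  have hcolumns : ∑ a, ∑ x, e x a = Fintype.card I := by
    rw [sum_comm]
    simp [hrow]
  exact natCast_le_card_of_sum_isStarProjection_eq (𝕜 := ℂ) hcolumn hcolumns

/-- In a (nonzero) unital C*-algebra, a family of projections `e x a` (x ∈ I, a ∈ O)
with each row summing to 1 and column orthogonality forces `|I| ≤ |O|`. -/
theorem card_inputs_le_card_outputs
    {A : Type*} [NormedRing A] [StarRing A] [CStarRing A] [NormedAlgebra ℂ A]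
    [StarModule ℂ A] [CompleteSpace A] [Nontrivial A]
    {I O : Type*} [Fintype I] [Fintype O]
    (e : I → O → A)
    (hidem : ∀ x a, e x a * e x a = e x a)
    (hsa : ∀ x a, star (e x a) = e x a)
    (hrow : ∀ x, ∑ a, e x a = 1)
    (hcol : ∀ x y a, x ≠ y → e x a * e y a = 0) :
    Fintype.card I ≤ Fintype.card O :=
  card_inputs_le_card_outputs_general e hidem hsa hrow hcol
end

section
/- Let A be a unital C*-algebra and {e_{x,a} : x, a ∈ Fin n} a family of projections with ∑_a e_{x,a} = 1 for all x, and e_{x,a} e_{y,a} = 0 for all a whenever x ≠ y. Then ∑_x e_{x,a} = 1 for all a; i.e., the matrix (e_{x,a}) is a quantum permutation (each row and each column is a partition of unity into projections). -/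
/-!
Orthogonality makes each column sum `p a = ∑ x, e x a` a projection, and summing the rows gives
`∑ a, p a = n`. Hence the projections `1 - p a` sum to `0`; being positive, they all vanish.
-/

open Finset

theorem IsStarProjection.sum_of_pairwise_mul_eq_zero {R ι : Type*} [Semiring R] [StarRing R]
    {p : ι → R} (hp : ∀ i, IsStarProjection (p i)) (horth : Pairwise (p · * p · = 0))
    (s : Finset ι) : IsStarProjection (∑ i ∈ s, p i) where
  isIdempotentElem :=
    OrthogonalIdempotents.isIdempotentElem_sum ⟨fun i ↦ (hp i).isIdempotentElem, horth⟩
  isSelfAdjoint := isSelfAdjoint_sum s fun i _ ↦ (hp i).isSelfAdjoint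

theorem IsStarProjection.eq_one_of_sum_eq_card {R ι : Type*} [Ring R] [PartialOrder R]
    [StarRing R] [StarOrderedRing R] [Fintype ι] {p : ι → R} (hp : ∀ i, IsStarProjection (p i))
    (hsum : ∑ i, p i = Fintype.card ι) (i : ι) : p i = 1 := by
  have hcompl : ∑ j, (1 - p j) = 0 := by
    rw [sum_sub_distrib, hsum, sum_const, card_univ, nsmul_one, sub_self]
  have hzero :=
    (sum_eq_zero_iff_of_nonneg fun j _ ↦ (hp j).one_sub.nonneg).mp hcompl i (mem_univ i)
  exact (sub_eq_zero.mp hzero).symm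

/-- If `(e x a)` is an `n × n` matrix of projections in a unital C*-algebra with each row
summing to 1 and column orthogonality, then each column also sums to 1, i.e. `(e x a)`
is a quantum permutation. -/
theorem columns_sum_to_one
    {A : Type*} [NormedRing A] [StarRing A] [CStarRing A] [NormedAlgebra ℂ A]
    [StarModule ℂ A] [CompleteSpace A]
    {n : ℕ} (e : Fin n → Fin n → A)
    (hidem : ∀ x a, e x a * e x a = e x a)
    (hsa : ∀ x a, star (e x a) = e x a)
    (hrow : ∀ x, ∑ a, e x a = 1)
    (hcol : ∀ x y a, x ≠ y → e x a * e y a = 0) :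
    ∀ a, ∑ x, e x a = 1 := by
  -- positivity of projections needs an order: the spectral one of the C*-algebra `A`
  let _ : CStarAlgebra A := {}
  let _ := CStarAlgebra.spectralOrder A
  have _ := CStarAlgebra.spectralOrderedRing A
  have hproj : ∀ x a, IsStarProjection (e x a) := fun x a ↦ ⟨hidem x a, hsa x a⟩
  have hcolumn : ∀ a, IsStarProjection (∑ x, e x a) := fun a ↦
    IsStarProjection.sum_of_pairwise_mul_eq_zero (hproj · a) (fun x y hxy ↦ hcol x y a hxy) _
  have htotal : ∑ a, ∑ x, e x a = (Fintype.card (Fin n) : A) := by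
    rw [sum_comm, sum_congr rfl fun x _ ↦ hrow x, sum_const, card_univ, nsmul_one]
  exact IsStarProjection.eq_one_of_sum_eq_card hcolumn htotal
end

section
/- Let H be a complex Hilbert space, n ≥ 1, and let {h_{x,a} : x, a ∈ Fin n} be vectors in H such that (i) ⟨h_{x,a}, h_{x,b}⟩ = 0 for all x and all a ≠ b, (ii) ⟨h_{x,a}, h_{y,a}⟩ = 0 for all a and all x ≠ y, and (iii) there is a unit vector h with ∑_a h_{x,a} = h for every x. Then ∑_x h_{x,a} = h for every a. -/
/-- Vector permutation matrices: row/column orthogonality plus each row summing to a fixed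
unit vector forces each column to sum to the same unit vector. -/
theorem columns_sum_to_unit_vector
    {H : Type*} [NormedAddCommGroup H] [InnerProductSpace ℂ H]
    {n : ℕ} (hn : 1 ≤ n) (h : Fin n → Fin n → H) (v : H)
    (hrow_orth : ∀ x a b, a ≠ b → (inner ℂ (h x a) (h x b) : ℂ) = 0)
    (hcol_orth : ∀ a x y, x ≠ y → (inner ℂ (h x a) (h y a) : ℂ) = 0)
    (hunit : ‖v‖ = 1)
    (hrow_sum : ∀ x, ∑ a, h x a = v) :
    ∀ a, ∑ x, h x a = v := by
  set k : Fin n → H := fun a => ∑ x, h x a with hk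
  -- column norm squares
  have col_sq : ∀ a, (inner ℂ (k a) (k a) : ℂ) = ∑ x, inner ℂ (h x a) (h x a) := by
    intro a
    simp only [hk, sum_inner]
    refine Finset.sum_congr rfl fun x _ => ?_
    rw [inner_sum, Finset.sum_eq_single x]
    · intro b _ hb; exact hcol_orth a x b fun e => hb e.symm
    · intro hx; exact absurd (Finset.mem_univ x) hx
  have row_sq : ∀ x, (inner ℂ (v : H) (v : H) : ℂ) = ∑ a, inner ℂ (h x a) (h x a) := by
    intro x
    rw [← hrow_sum x, sum_inner]
    refine Finset.sum_congr rfl fun a _ => ?_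
    rw [inner_sum, Finset.sum_eq_single a]
    · intro b _ hb; exact hrow_orth x a b fun e => hb e.symm
    · intro ha; exact absurd (Finset.mem_univ a) ha
  have hvv : (inner ℂ (v : H) v : ℂ) = 1 := by
    rw [inner_self_eq_norm_sq_to_K, hunit]; norm_num
  -- sum of norms squared of columns equals n
  have sum_col : ∑ a, (inner ℂ (k a) (k a) : ℂ) = n := by
    rw [Finset.sum_congr rfl fun a _ => col_sq a, Finset.sum_comm]
    have : ∀ x ∈ Finset.univ, ∑ a, (inner ℂ (h x a) (h x a) : ℂ) = 1 := by
      intro x _; rw [← row_sq x, hvv]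
    rw [Finset.sum_congr rfl this]
    simp
  -- sum of k's is n • v
  have sum_k : ∑ a, k a = (n : ℂ) • v := by
    simp only [hk]
    rw [Finset.sum_comm]
    simp only [hrow_sum, Finset.sum_const, Finset.card_univ, Fintype.card_fin]
    exact (Nat.cast_smul_eq_nsmul ℂ n v).symm
  -- sum of inner ℂ (k a) v
  have sum_kv : ∑ a, (inner ℂ (k a) v : ℂ) = n := by
    rw [← sum_inner, sum_k, inner_smul_left, hvv]
    simp
  -- ∑ ‖k a - v‖² = 0
  have key : ∑ a, (‖k a - v‖ : ℝ) ^ 2 = 0 := by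
    have expand : ∀ a, (‖k a - v‖ : ℝ) ^ 2 =
        RCLike.re (inner ℂ (k a) (k a) : ℂ) - 2 * RCLike.re (inner ℂ (k a) v : ℂ)
          + RCLike.re (inner ℂ (v : H) v : ℂ) := by
      intro a
      rw [@norm_sub_sq ℂ H _ _ _ (k a) v, ← @inner_self_eq_norm_sq ℂ, ← @inner_self_eq_norm_sq ℂ]
    rw [Finset.sum_congr rfl fun a _ => expand a]
    rw [Finset.sum_add_distrib, Finset.sum_sub_distrib]
    have s1 : ∑ x, RCLike.re (inner ℂ (k x) (k x) : ℂ) = (n : ℝ) := by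
      rw [← map_sum, sum_col]; simp
    have s2 : ∑ x, 2 * RCLike.re (inner ℂ (k x) v : ℂ) = 2 * (n : ℝ) := by
      rw [← Finset.mul_sum, ← map_sum, sum_kv]; simp
    have s3 : ∑ _x : Fin n, RCLike.re (inner ℂ (v : H) v : ℂ) = (n : ℝ) := by
      simp [hvv, hunit]
    rw [s1, s2, s3]; ring
  have hzero : ∀ a ∈ Finset.univ, (‖k a - v‖ : ℝ) ^ 2 = 0 := by
    intro a _
    have := Finset.sum_eq_zero_iff_of_nonneg (fun a _ => sq_nonneg ‖k a - v‖) |>.mp key a (Finset.mem_univ a)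
    exact this
  intro a
  have := hzero a (Finset.mem_univ a)
  have : k a - v = 0 := by
    have := pow_eq_zero_iff (n := 2) (by norm_num) |>.mp this
    exact norm_eq_zero.mp this
  have := sub_eq_zero.mp this
  simpa [hk] using this
end

section
/- Let p(a,b|x,y), for x,y,a,b ∈ Fin n with n ≥ 1, be a bisynchronous conditional probability density, i.e., p ≥ 0, ∑_{a,b} p(a,b|x,y) = 1 for all x,y, p(a,b|x,x) = 0 for a ≠ b, and p(a,a|x,y) = 0 for x ≠ y. Define Φ_p : M_n(ℂ) → M_n(ℂ) on matrix units by Φ_p(E_{x,y}) = ∑_{a,b} p(a,b|x,y) E_{a,b}. Then Φ_p is trace preserving: Tr(Φ_p(X)) = Tr(X) for all X ∈ M_n(ℂ). -/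
open Matrix in
/-- The map `Φ_p` associated to a bisynchronous conditional probability density is
trace preserving. -/
theorem bisynchronous_map_trace_preserving
    {n : ℕ} (hn : 1 ≤ n) (p : Fin n → Fin n → Fin n → Fin n → ℝ)
    (hpos : ∀ a b x y, 0 ≤ p a b x y)
    (hsum : ∀ x y, ∑ a, ∑ b, p a b x y = 1)
    (hsync : ∀ a b x, a ≠ b → p a b x x = 0)
    (hbisync : ∀ a x y, x ≠ y → p a a x y = 0)
    (Φ : Matrix (Fin n) (Fin n) ℂ → Matrix (Fin n) (Fin n) ℂ)
    (hΦ : ∀ X : Matrix (Fin n) (Fin n) ℂ,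
      Φ X = ∑ x, ∑ y, ∑ a, ∑ b, (X x y * (p a b x y : ℂ)) • single a b 1) :
    ∀ X : Matrix (Fin n) (Fin n) ℂ, (Φ X).trace = X.trace := by
  intro X
  rw [hΦ]
  simp only [trace_sum, trace_smul, smul_eq_mul]
  have tr : ∀ a b : Fin n, (single a b (1:ℂ) : Matrix (Fin n) (Fin n) ℂ).trace
      = if a = b then 1 else 0 := by
    intro a b
    by_cases hab : a = b
    · subst hab; simp [Matrix.trace_single_eq_same]
    · simp [hab, Matrix.trace_single_eq_of_ne a b (1:ℂ) hab]
  simp only [tr]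
  have key : ∀ x y : Fin n, (∑ a, ∑ b : Fin n,
      X x y * (p a b x y : ℂ) * (if a = b then 1 else 0))
      = if x = y then X x x else 0 := by
    intro x y
    by_cases hxy : x = y
    · subst hxy
      rw [if_pos rfl]
      have h3 : ∑ a, ∑ b : Fin n, X x x * (p a b x x : ℂ) * (if a = b then 1 else 0)
          = X x x * ∑ a, ∑ b : Fin n, (p a b x x : ℂ) * (if a = b then 1 else 0) := by
        rw [Finset.mul_sum]; congr 1; ext a; rw [Finset.mul_sum]; congr 1; ext b; ring
      rw [h3]
      have h4 : ∑ a, ∑ b : Fin n, (p a b x x : ℂ) * (if a = b then 1 else 0)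
          = ∑ a, ∑ b : Fin n, (p a b x x : ℂ) := by
        congr 1; ext a; congr 1; ext b
        by_cases hab : a = b
        · simp [hab]
        · simp [hab, hsync a b x hab]
      rw [h4]
      have h5 : (∑ a, ∑ b : Fin n, (p a b x x : ℂ)) = ((∑ a, ∑ b, p a b x x : ℝ) : ℂ) := by
        push_cast; rfl
      rw [h5, hsum, Complex.ofReal_one, mul_one]
    · rw [if_neg hxy]
      apply Finset.sum_eq_zero; intro a _
      apply Finset.sum_eq_zero; intro b _
      by_cases hab : a = b
      · subst hab
        simp [hbisync a x y hxy]
      · simp [hab]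
  calc ∑ x, ∑ y, ∑ a, ∑ b : Fin n,
        X x y * (p a b x y : ℂ) * (if a = b then 1 else 0)
      = ∑ x, ∑ y : Fin n, if x = y then X x x else 0 := by
        apply Finset.sum_congr rfl; intro x _
        apply Finset.sum_congr rfl; intro y _
        exact key x y
    _ = ∑ x, X x x := by
        apply Finset.sum_congr rfl; intro x _; simp
    _ = X.trace := rfl
end

section
/- Let p(x,y|v,w) (with v,w ∈ Fin n, x,y ∈ Fin k) and q(a,b|x,y) (with x,y ∈ Fin k, a,b ∈ Fin l) be conditional probability densities, and define r(a,b|v,w) := ∑_{x,y} q(a,b|x,y) p(x,y|v,w). Then r is a conditional probability density from Fin n inputs to Fin l outputs, the associated linear maps satisfy Φ_r = Φ_q ∘ Φ_p, and if both p and q are bisynchronous (with n = k = l) then r is bisynchronous. -/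
open Matrix in
lemma sum4_swap {M : Type*} [AddCommMonoid M] {α β γ δ : Type*} [Fintype α] [Fintype β]
    [Fintype γ] [Fintype δ] (f : α → β → γ → δ → M) :
    ∑ a, ∑ b, ∑ x, ∑ y, f a b x y = ∑ x, ∑ y, ∑ a, ∑ b, f a b x y :=
  calc ∑ a, ∑ b, ∑ x, ∑ y, f a b x y
      = ∑ a, ∑ x, ∑ y, ∑ b, f a b x y := by
        refine Finset.sum_congr rfl fun a _ => ?_
        rw [Finset.sum_comm]
        exact Finset.sum_congr rfl fun x _ => Finset.sum_comm
    _ = ∑ x, ∑ y, ∑ a, ∑ b, f a b x y := by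
        rw [Finset.sum_comm]
        exact Finset.sum_congr rfl fun x _ => Finset.sum_comm

open Matrix in
lemma entry_of_sum {k l : ℕ} (c : Fin k → Fin k → Fin l → Fin l → ℂ) (a b : Fin l) :
    (∑ x, ∑ y, ∑ a', ∑ b', (c x y a' b') • single a' b' (1:ℂ)) a b
    = ∑ x, ∑ y, c x y a b := by
  simp [Matrix.sum_apply, Matrix.single, Matrix.of_apply, ite_and, mul_ite]

open Matrix in
/-- Composition of conditional probability densities: `r := q ∘ p` is a density, the
associated maps compose, and bisynchronicity is preserved. -/
theorem composition_of_densities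
    {n k l : ℕ}
    (p : Fin k → Fin k → Fin n → Fin n → ℝ)
    (q : Fin l → Fin l → Fin k → Fin k → ℝ)
    (hp_pos : ∀ x y v w, 0 ≤ p x y v w) (hp_sum : ∀ v w, ∑ x, ∑ y, p x y v w = 1)
    (hq_pos : ∀ a b x y, 0 ≤ q a b x y) (hq_sum : ∀ x y, ∑ a, ∑ b, q a b x y = 1)
    (r : Fin l → Fin l → Fin n → Fin n → ℝ)
    (hr : ∀ a b v w, r a b v w = ∑ x, ∑ y, q a b x y * p x y v w)
    (Φp : Matrix (Fin n) (Fin n) ℂ → Matrix (Fin k) (Fin k) ℂ)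
    (hΦp : ∀ X, Φp X = ∑ v, ∑ w, ∑ x, ∑ y, (X v w * (p x y v w : ℂ)) • single x y 1)
    (Φq : Matrix (Fin k) (Fin k) ℂ → Matrix (Fin l) (Fin l) ℂ)
    (hΦq : ∀ X, Φq X = ∑ x, ∑ y, ∑ a, ∑ b, (X x y * (q a b x y : ℂ)) • single a b 1)
    (Φr : Matrix (Fin n) (Fin n) ℂ → Matrix (Fin l) (Fin l) ℂ)
    (hΦr : ∀ X, Φr X = ∑ v, ∑ w, ∑ a, ∑ b, (X v w * (r a b v w : ℂ)) • single a b 1) :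
    ((∀ a b v w, 0 ≤ r a b v w) ∧ (∀ v w, ∑ a, ∑ b, r a b v w = 1)) ∧
    (Φr = Φq ∘ Φp) ∧
    (((∀ x y v, x ≠ y → p x y v v = 0) ∧ (∀ x v w, v ≠ w → p x x v w = 0)) →
      ((∀ a b x, a ≠ b → q a b x x = 0) ∧ (∀ a x y, x ≠ y → q a a x y = 0)) →
      ((∀ a b v, a ≠ b → r a b v v = 0) ∧ (∀ a v w, v ≠ w → r a a v w = 0))) := by
  refine ⟨⟨fun a b v w => ?_, fun v w => ?_⟩, ?_, ?_⟩
  · rw [hr]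
    exact Finset.sum_nonneg fun x _ => Finset.sum_nonneg fun y _ =>
      mul_nonneg (hq_pos a b x y) (hp_pos x y v w)
  · simp only [hr]
    rw [sum4_swap]
    simp_rw [← Finset.sum_mul, hq_sum, one_mul]
    exact hp_sum v w
  · funext X
    ext a b
    have e3 : ∀ x y, Φp X x y = ∑ v, ∑ w, X v w * (p x y v w : ℂ) := by
      intro x y; rw [hΦp]; exact entry_of_sum _ x y
    have e1 : Φr X a b = ∑ v, ∑ w, X v w * (r a b v w : ℂ) := by
      rw [hΦr]; exact entry_of_sum _ a b
    have e2 : (Φq ∘ Φp) X a b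
        = ∑ x, ∑ y, (∑ v, ∑ w, X v w * (p x y v w : ℂ)) * (q a b x y : ℂ) := by
      show Φq (Φp X) a b = _
      rw [hΦq, entry_of_sum]
      exact Finset.sum_congr rfl fun x _ => Finset.sum_congr rfl fun y _ => by rw [e3]
    rw [e1, e2]
    simp_rw [hr]
    push_cast
    simp_rw [Finset.mul_sum]
    rw [sum4_swap]
    refine Finset.sum_congr rfl fun x _ => Finset.sum_congr rfl fun y _ => ?_
    rw [Finset.sum_mul]
    refine Finset.sum_congr rfl fun v _ => ?_
    rw [Finset.sum_mul]
    exact Finset.sum_congr rfl fun w _ => by ring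
  · rintro ⟨hp1, hp2⟩ ⟨hq1, hq2⟩
    constructor
    · intro a b v hab
      rw [hr]
      refine Finset.sum_eq_zero fun x _ => Finset.sum_eq_zero fun y _ => ?_
      by_cases hxy : x = y
      · subst hxy; rw [hq1 a b x hab, zero_mul]
      · rw [hp1 x y v hxy, mul_zero]
    · intro a v w hvw
      rw [hr]
      refine Finset.sum_eq_zero fun x _ => Finset.sum_eq_zero fun y _ => ?_
      by_cases hxy : x = y
      · subst hxy; rw [hp2 x v w hvw, mul_zero]
      · rw [hq2 a x y hxy, zero_mul]
end

section
/- Define p(a,b|x,y) for a,b,x,y ∈ ZMod 3 by: p(a,b|x,x) = 1/3 if a = b and 0 otherwise; and for x ≠ y, p(a,b|x,y) = 1/3 if a − b = 1 and 0 otherwise. Then p is a bisynchronous non-signalling density, but the flipped family q(x,y|a,b) := p(a,b|x,y) is not a conditional probability density: ∑_{x,y} q(x,y|2,0) = 0 ≠ 1. -/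
/-- The density of Remark 2.7: `p(a,b|x,x) = 1/3` iff `a = b`, and for `x ≠ y`,
`p(a,b|x,y) = 1/3` iff `a - b = 1` (all indices in `ZMod 3`). -/
noncomputable def remarkDensity (a b x y : ZMod 3) : ℝ :=
  if x = y then (if a = b then 1/3 else 0) else (if a - b = 1 then 1/3 else 0)

lemma sum3 (f : ZMod 3 → ℝ) : ∑ x, f x = f 0 + f 1 + f 2 := by
  show ∑ x : Fin 3, f x = _
  exact Fin.sum_univ_three f

lemma rowsum (a x y : ZMod 3) : ∑ b, remarkDensity a b x y = 1/3 := by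
  unfold remarkDensity
  split
  · simp
  · have h : ∀ b : ZMod 3, (a - b = 1) ↔ (a - 1 = b) := by
      intro b
      rw [sub_eq_iff_eq_add, sub_eq_iff_eq_add, add_comm]
    simp only [h]
    simp
lemma colsum (b x y : ZMod 3) : ∑ a, remarkDensity a b x y = 1/3 := by
  unfold remarkDensity
  split
  · simp
  · have h : ∀ a : ZMod 3, (a - b = 1) ↔ (a = 1 + b) := by
      intro a
      rw [sub_eq_iff_eq_add, add_comm]
    simp only [h]
    simp

/-- `remarkDensity` is a bisynchronous non-signalling density, but its flip
`q(x,y|a,b) := p(a,b|x,y)` is not a conditional probability density, since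
`∑_{x,y} q(x,y|2,0) = 0 ≠ 1`. -/
theorem remarkDensity_bisynchronous_nonsignalling_flip_not_density :
    (∀ a b x y, 0 ≤ remarkDensity a b x y) ∧
    (∀ x y, ∑ a, ∑ b, remarkDensity a b x y = 1) ∧
    (∀ a x y y', ∑ b, remarkDensity a b x y = ∑ b, remarkDensity a b x y') ∧
    (∀ b y x x', ∑ a, remarkDensity a b x y = ∑ a, remarkDensity a b x' y) ∧
    (∀ a b x, a ≠ b → remarkDensity a b x x = 0) ∧
    (∀ a x y, x ≠ y → remarkDensity a a x y = 0) ∧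
    ((∑ x, ∑ y, remarkDensity 2 0 x y) = 0 ∧ (0 : ℝ) ≠ 1) := by
  refine ⟨?_, ?_, ?_, ?_, ?_, ?_, ?_, ?_⟩
  · intro a b x y
    unfold remarkDensity
    split <;> split <;> norm_num
  · intro x y
    rw [sum3]
    simp only [rowsum]
    norm_num
  · intro a x y y'
    simp [rowsum]
  · intro b y x x'
    simp [colsum]
  · intro a b x h
    simp [remarkDensity, h]
  · intro a x y h
    simp [remarkDensity, h]
  · have h : ∀ x y : ZMod 3, remarkDensity 2 0 x y = 0 := by
      intro x y
      unfold remarkDensity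
      split <;>
        norm_num [show (2:ZMod 3) ≠ 0 by decide, show (2:ZMod 3) ≠ 1 by decide, show (2-0:ZMod 3) ≠ 1 by decide]
    simp [h]
  · norm_num
end

section
/- Let Φ : M_n(ℂ) → M_n(ℂ) be a mixed permutation map, i.e., Φ(X) = ∑_{j=1}^k λ_j U_j* X U_j where each U_j is a permutation matrix arising from a permutation σ_j of Fin n, λ_j ≥ 0, and ∑_j λ_j = 1. Define p(a,b|x,y) by Φ(E_{x,y}) = ∑_{a,b} p(a,b|x,y) E_{a,b}. Then p(a,b|x,y) = ∑_{j : σ_j(x)=a, σ_j(y)=b} λ_j, and p is a bisynchronous conditional probability density. -/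
open Matrix in
lemma std_ct {n : ℕ} (a b : Fin n) :
    (single a b (1:ℂ))ᴴ = single b a (1:ℂ) := by
  ext i j
  simp [Matrix.single, conjTranspose_apply, apply_ite, and_comm]

open Matrix in
lemma conj_perm {n : ℕ} (σ : Equiv.Perm (Fin n)) (x y : Fin n) :
    (∑ z, single z (σ z) (1 : ℂ))ᴴ * single x y (1:ℂ) *
      (∑ z, single z (σ z) (1 : ℂ)) = single (σ x) (σ y) (1:ℂ) := by
  rw [conjTranspose_sum]
  simp only [std_ct, Finset.sum_mul, Finset.mul_sum]
  rw [Finset.sum_eq_single y]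
  · rw [Finset.sum_eq_single x]
    · rw [single_mul_single_same, single_mul_single_same, mul_one, one_mul]
    · intro i _ hi
      rw [single_mul_single_of_ne (h := hi), zero_mul]
    · simp
  · intro z _ hz
    refine Finset.sum_eq_zero fun i _ => ?_
    by_cases hi : i = x
    · subst hi; rw [single_mul_single_same, single_mul_single_of_ne (h := Ne.symm hz)]
    · rw [single_mul_single_of_ne (h := hi), zero_mul]
  · simp

lemma sum_swap3 {k n : ℕ} {α : Type*} [AddCommMonoid α] (f : Fin k → Fin n → Fin n → α) :
    ∑ a, ∑ b, ∑ j, f j a b = ∑ j, ∑ a, ∑ b, f j a b := by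
  have h1 : ∀ a : Fin n, ∑ b, ∑ j, f j a b = ∑ j, ∑ b, f j a b := fun a => Finset.sum_comm
  simp_rw [h1]
  exact Finset.sum_comm



open Matrix in
/-- The density associated to a mixed permutation map `Φ(X) = ∑_j λ_j U_j* X U_j` is
`p(a,b|x,y) = ∑_{j : σ_j(x)=a, σ_j(y)=b} λ_j`, and it is a bisynchronous conditional
probability density. -/
theorem mixed_permutation_map_density_bisynchronous
    {n k : ℕ} (lam : Fin k → ℝ) (σ : Fin k → Equiv.Perm (Fin n))
    (hlam : ∀ j, 0 ≤ lam j) (hlam_sum : ∑ j, lam j = 1)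
    (U : Fin k → Matrix (Fin n) (Fin n) ℂ)
    (hU : ∀ j, U j = ∑ z, single z (σ j z) (1 : ℂ))
    (Φ : Matrix (Fin n) (Fin n) ℂ → Matrix (Fin n) (Fin n) ℂ)
    (hΦ : ∀ X, Φ X = ∑ j, (lam j : ℂ) • ((U j)ᴴ * X * U j))
    (p : Fin n → Fin n → Fin n → Fin n → ℝ)
    (hp : ∀ a b x y, p a b x y = ∑ j, if σ j x = a ∧ σ j y = b then lam j else 0) :
    (∀ x y : Fin n, Φ (single x y (1 : ℂ)) =
      ∑ a, ∑ b, (p a b x y : ℂ) • single a b (1 : ℂ)) ∧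
    (∀ a b x y, 0 ≤ p a b x y) ∧
    (∀ x y, ∑ a, ∑ b, p a b x y = 1) ∧
    (∀ a b x, a ≠ b → p a b x x = 0) ∧
    (∀ a x y, x ≠ y → p a a x y = 0) := by
  refine ⟨?_, ?_, ?_, ?_, ?_⟩
  · intro x y
    rw [hΦ]
    simp only [hU, conj_perm, hp]
    push_cast
    simp only [Finset.sum_smul, ite_smul, zero_smul]
    rw [sum_swap3]
    refine Finset.sum_congr rfl fun j _ => ?_
    ext i l
    by_cases h1 : σ j x = i <;> by_cases h2 : σ j y = l <;>
      simp [Matrix.sum_apply, Matrix.single, h1, h2, Finset.sum_ite_eq, ite_and,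
        apply_ite Complex.ofReal, apply_ite (fun M : Matrix (Fin n) (Fin n) ℂ => M i l),
        Matrix.smul_apply, Matrix.of_apply]
  · intro a b x y
    rw [hp]
    exact Finset.sum_nonneg fun j _ => by split <;> simp [hlam]
  · intro x y
    simp only [hp]
    rw [sum_swap3, ← hlam_sum]
    refine Finset.sum_congr rfl fun j _ => ?_
    simp [ite_and, Finset.sum_ite_eq]
  · intro a b x hab
    rw [hp]
    refine Finset.sum_eq_zero fun j _ => ?_
    rw [if_neg]
    rintro ⟨rfl, rfl⟩
    exact hab rfl
  · intro a x y hxy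
    rw [hp]
    refine Finset.sum_eq_zero fun j _ => ?_
    rw [if_neg]
    rintro ⟨h1, h2⟩
    exact hxy ((σ j).injective (h1.trans h2.symm))
end

section
/- Let A be a unital C*-algebra with a faithful tracial state τ, and let u = (e_{x,a})_{x,a ∈ Fin n} be a quantum permutation over A (each entry a projection, each row and column summing to 1). Define p(a,b|x,y) := τ(e_{x,a} e_{y,b}). Then p is a bisynchronous conditional probability density: p ≥ 0, ∑_{a,b} p(a,b|x,y) = 1 for all x,y, p(a,b|x,x) = 0 for a ≠ b, and p(a,a|x,y) = 0 for x ≠ y. -/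
/-!
For star projections `p, q` the trace property gives `τ (p * q) = τ (p * q * p) =
τ (star (q * p) * (q * p)) ≥ 0`. If the star projections `p k` sum to `1`, then
`∑ k, τ (p i * p k) = τ (p i) = τ (p i * p i)`, so the remaining nonnegative terms vanish;
applied to the rows and to the columns of `e` this gives both vanishing conditions.
-/

open Finset

theorem Finset.eq_zero_of_sum_eq_apply_of_nonneg {ι M : Type*} [Fintype ι]
    [AddCommMonoid M] [PartialOrder M] [IsOrderedCancelAddMonoid M]
    {f : ι → M} (hf : ∀ i, 0 ≤ f i) {a : ι} (hsum : ∑ i, f i = f a) {b : ι} (hab : a ≠ b) :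
    f b = 0 := by
  classical
  have hle : f a + f b ≤ f a :=
    calc f a + f b = ∑ i ∈ {a, b}, f i := (sum_pair hab).symm
      _ ≤ ∑ i, f i := sum_le_sum_of_subset_of_nonneg (subset_univ _) fun i _ _ ↦ hf i
      _ = f a := hsum
  exact le_antisymm (by simpa using hle) (hf b)

theorem IsStarProjection.star_mul_mul_self {A : Type*} [Semigroup A] [StarMul A] {p q : A}
    (hp : IsStarProjection p) (hq : IsStarProjection q) :
    star (q * p) * (q * p) = p * q * p := by
  rw [star_mul, hp.isSelfAdjoint.star_eq, hq.isSelfAdjoint.star_eq, mul_assoc,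
    ← mul_assoc q, hq.isIdempotentElem.eq, mul_assoc]

theorem map_mul_nonneg_of_isStarProjection {A M F : Type*} [Semigroup A] [StarMul A] [LE M]
    [Zero M] [FunLike F A M] {τ : F} (htr : ∀ a b, τ (a * b) = τ (b * a))
    (hpos : ∀ a, 0 ≤ τ (star a * a)) {p q : A} (hp : IsStarProjection p)
    (hq : IsStarProjection q) : 0 ≤ τ (p * q) := by
  have : τ (p * q) = τ (star (q * p) * (q * p)) := by
    rw [hp.star_mul_mul_self hq, htr (p * q), ← mul_assoc, hp.isIdempotentElem.eq]
  exact this ▸ hpos _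

theorem sum_sum_map_mul_of_sum_eq_one {A M F : Type*} [NonAssocSemiring A] [AddCommMonoid M]
    [FunLike F A M] [AddMonoidHomClass F A M] {τ : F} {ι κ : Type*} [Fintype ι] [Fintype κ]
    {p : ι → A} {q : κ → A} (hp : ∑ i, p i = 1) (hq : ∑ j, q j = 1) :
    ∑ i, ∑ j, τ (p i * q j) = τ 1 := by
  simp_rw [← map_sum, ← mul_sum, ← sum_mul, hp, hq, one_mul]

theorem map_mul_eq_zero_of_sum_eq_one {A M F : Type*} [Semiring A] [StarMul A]
    [AddCommMonoid M] [PartialOrder M] [IsOrderedCancelAddMonoid M]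
    [FunLike F A M] [AddMonoidHomClass F A M] {τ : F} {ι : Type*} [Fintype ι]
    (htr : ∀ a b, τ (a * b) = τ (b * a)) (hpos : ∀ a, 0 ≤ τ (star a * a))
    {p : ι → A} (hp : ∀ i, IsStarProjection (p i)) (hsum : ∑ i, p i = 1)
    {i j : ι} (hij : i ≠ j) : τ (p i * p j) = 0 := by
  refine eq_zero_of_sum_eq_apply_of_nonneg
    (fun k ↦ map_mul_nonneg_of_isStarProjection htr hpos (hp i) (hp k)) ?_ hij
  rw [← map_sum, ← mul_sum, hsum, mul_one, (hp i).isIdempotentElem.eq]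

open ComplexOrder in
theorem quantum_permutation_trace_density_bisynchronous_general
    {A : Type*} [NormedRing A] [StarRing A] [NormedAlgebra ℂ A]
    (τ : A →ₗ[ℂ] ℂ) (hτ1 : τ 1 = 1)
    (hτtr : ∀ a b : A, τ (a * b) = τ (b * a))
    (hτpos : ∀ a : A, 0 ≤ τ (star a * a))
    {n : ℕ} (e : Fin n → Fin n → A)
    (hidem : ∀ x a, e x a * e x a = e x a)
    (hsa : ∀ x a, star (e x a) = e x a)
    (hrow : ∀ x, ∑ a, e x a = 1)
    (hcol : ∀ a, ∑ x, e x a = 1) :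
    (∀ x y a b, 0 ≤ τ (e x a * e y b)) ∧
    (∀ x y, ∑ a, ∑ b, τ (e x a * e y b) = 1) ∧
    (∀ x a b, a ≠ b → τ (e x a * e x b) = 0) ∧
    (∀ x y a, x ≠ y → τ (e x a * e y a) = 0) := by
  have hproj : ∀ x a, IsStarProjection (e x a) := fun x a ↦ ⟨hidem x a, hsa x a⟩
  refine ⟨fun x y a b ↦ map_mul_nonneg_of_isStarProjection hτtr hτpos (hproj x a) (hproj y b),
    fun x y ↦ hτ1 ▸ sum_sum_map_mul_of_sum_eq_one (hrow x) (hrow y),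
    fun x a b ↦ map_mul_eq_zero_of_sum_eq_one hτtr hτpos (hproj x) (hrow x),
    fun x y a ↦ map_mul_eq_zero_of_sum_eq_one hτtr hτpos (fun z ↦ hproj z a) (hcol a)⟩

open ComplexOrder in
/-- A quantum permutation together with a faithful tracial state gives rise to a
bisynchronous conditional probability density `p(a,b|x,y) = τ(e_{x,a} e_{y,b})`. -/
theorem quantum_permutation_trace_density_bisynchronous
    {A : Type*} [NormedRing A] [StarRing A] [CStarRing A] [NormedAlgebra ℂ A]
    [StarModule ℂ A] [CompleteSpace A]
    (τ : A →ₗ[ℂ] ℂ) (hτ1 : τ 1 = 1)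
    (hτtr : ∀ a b : A, τ (a * b) = τ (b * a))
    (hτpos : ∀ a : A, 0 ≤ τ (star a * a))
    (hτfaith : ∀ a : A, τ (star a * a) = 0 → a = 0)
    {n : ℕ} (e : Fin n → Fin n → A)
    (hidem : ∀ x a, e x a * e x a = e x a)
    (hsa : ∀ x a, star (e x a) = e x a)
    (hrow : ∀ x, ∑ a, e x a = 1)
    (hcol : ∀ a, ∑ x, e x a = 1) :
    (∀ x y a b, 0 ≤ τ (e x a * e y b)) ∧
    (∀ x y, ∑ a, ∑ b, τ (e x a * e y b) = 1) ∧
    (∀ x a b, a ≠ b → τ (e x a * e x b) = 0) ∧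
    (∀ x y a, x ≠ y → τ (e x a * e y a) = 0) :=
  quantum_permutation_trace_density_bisynchronous_general τ hτ1 hτtr hτpos e hidem hsa hrow hcol
end

section
/- Let A be a unital C*-algebra with a faithful tracial state τ, let u = (e_{x,a})_{x,a ∈ Fin n} be a quantum permutation over A, and let A' = (a_{i,j}) ∈ M_n(ℂ). If a_{i,j} = a_{k,l} whenever e_{i,k} e_{j,l} ≠ 0, then u* (A' ⊗ 1) u = A' ⊗ 1 in M_n(A), and consequently (A' ⊗ 1) u = u (A' ⊗ 1). -/
/-!
With `B = A' ⊗ 1`, each of `(uᵀ B u)_{ik}`, `(B u)_{ik}` and `(u B)_{ik}` is a double sum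
`∑_{l,r} c_{l,r} • (u_{..} * u_{..})` over products of two entries of `u` (for the last two after
inserting a row or column sum `1 = ∑ u`). The hypothesis on `A'` lets one change `c_{l,r}`, wherever
the product is nonzero, to a coefficient depending on a single index, and the row and column sums
of `u` then collapse the double sum. In particular `B u = u B` comes out directly, without first
showing that `u` is unitary.
-/

open Finset

lemma smul_eq_smul_of_ne_zero {K R : Type*} [Zero R] [SMulZeroClass K R] {c d : K} {x : R}
    (h : x ≠ 0 → c = d) : c • x = d • x := by
  by_cases hx : x = 0
  · simp only [hx, smul_zero]
  · rw [h hx]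

namespace Matrix

variable {K R ι : Type*} [CommSemiring K] [Semiring R] [Algebra K R] [Fintype ι]

lemma map_algebraMap_mul_apply (A' : Matrix ι ι K) (u : Matrix ι ι R) (i k : ι) :
    (A'.map (algebraMap K R) * u) i k = ∑ j, A' i j • u j k := by
  simp only [mul_apply, map_apply, Algebra.smul_def]

lemma mul_map_algebraMap_apply (u : Matrix ι ι R) (A' : Matrix ι ι K) (i k : ι) :
    (u * A'.map (algebraMap K R)) i k = ∑ j, A' j k • u i j := by
  simp only [mul_apply, map_apply, Algebra.smul_def, Algebra.commutes]

lemma transpose_mul_map_algebraMap_mul_apply (u : Matrix ι ι R) (A' : Matrix ι ι K) (i k : ι) :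
    (uᵀ * A'.map (algebraMap K R) * u) i k = ∑ l, ∑ r, A' l r • (u l i * u r k) := by
  simp only [mul_apply, sum_mul, transpose_apply, map_apply, Algebra.smul_def, ← mul_assoc,
    Algebra.commutes]
  exact sum_comm

theorem transpose_mul_map_algebraMap_mul_eq (u : Matrix ι ι R) (hcol : ∀ a, ∑ x, u x a = 1)
    (A' : Matrix ι ι K) (hA' : ∀ i j k l, u i k * u j l ≠ 0 → A' i j = A' k l) :
    uᵀ * A'.map (algebraMap K R) * u = A'.map (algebraMap K R) := by
  ext i k
  calc (uᵀ * A'.map (algebraMap K R) * u) i k = ∑ l, ∑ r, A' l r • (u l i * u r k) :=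
        transpose_mul_map_algebraMap_mul_apply u A' i k
    _ = ∑ l, ∑ r, A' i k • (u l i * u r k) :=
        sum_congr rfl fun l _ => sum_congr rfl fun r _ => smul_eq_smul_of_ne_zero (hA' l r i k)
    _ = A' i k • ((∑ l, u l i) * ∑ r, u r k) := by simp only [sum_mul_sum, smul_sum]
    _ = A'.map (algebraMap K R) i k := by
        rw [hcol, hcol, mul_one, map_apply, Algebra.algebraMap_eq_smul_one]

theorem map_algebraMap_mul_comm (u : Matrix ι ι R) (hrow : ∀ x, ∑ a, u x a = 1)
    (hcol : ∀ a, ∑ x, u x a = 1) (A' : Matrix ι ι K)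
    (hA' : ∀ i j k l, u i k * u j l ≠ 0 → A' i j = A' k l) :
    A'.map (algebraMap K R) * u = u * A'.map (algebraMap K R) := by
  ext i k
  calc (A'.map (algebraMap K R) * u) i k = ∑ j, A' i j • u j k :=
        map_algebraMap_mul_apply A' u i k
    _ = ∑ j, ∑ l, A' i j • (u i l * u j k) := by simp only [← smul_sum, ← sum_mul, hrow, one_mul]
    _ = ∑ j, ∑ l, A' l k • (u i l * u j k) :=
        sum_congr rfl fun j _ => sum_congr rfl fun l _ => smul_eq_smul_of_ne_zero (hA' i j l k)
    _ = ∑ l, A' l k • u i l := by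
        rw [sum_comm]
        simp only [← smul_sum, ← mul_sum, hcol, mul_one]
    _ = (u * A'.map (algebraMap K R)) i k := (mul_map_algebraMap_apply u A' i k).symm

end Matrix

open Matrix in
theorem fixed_matrix_commutes_with_quantum_permutation_general
    {A : Type*} [NormedRing A] [StarRing A] [NormedAlgebra ℂ A]
    {n : ℕ} (e : Fin n → Fin n → A)
    (hsa : ∀ x a, star (e x a) = e x a)
    (hrow : ∀ x, ∑ a, e x a = 1)
    (hcol : ∀ a, ∑ x, e x a = 1)
    (u : Matrix (Fin n) (Fin n) A) (hu : u = Matrix.of e)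
    (A' : Matrix (Fin n) (Fin n) ℂ)
    (hA' : ∀ i j k l, e i k * e j l ≠ 0 → A' i j = A' k l) :
    uᴴ * A'.map (algebraMap ℂ A) * u = A'.map (algebraMap ℂ A) ∧
    A'.map (algebraMap ℂ A) * u = u * A'.map (algebraMap ℂ A) := by
  subst u
  have hstar : (of e)ᴴ = (of e)ᵀ := by
    ext
    simp only [conjTranspose_apply, transpose_apply, of_apply, hsa]
  rw [hstar]
  exact ⟨transpose_mul_map_algebraMap_mul_eq _ hcol A' hA',
    map_algebraMap_mul_comm _ hrow hcol A' hA'⟩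

open Matrix in
/-- If a scalar matrix `A'` satisfies `a_{i,j} = a_{k,l}` whenever `e_{i,k} e_{j,l} ≠ 0`
for a quantum permutation `u = (e_{x,a})`, then `u*(A'⊗1)u = A'⊗1`, and consequently
`(A'⊗1)u = u(A'⊗1)`. -/
theorem fixed_matrix_commutes_with_quantum_permutation
    {A : Type*} [NormedRing A] [StarRing A] [CStarRing A] [NormedAlgebra ℂ A]
    [StarModule ℂ A] [CompleteSpace A]
    {n : ℕ} (e : Fin n → Fin n → A)
    (hidem : ∀ x a, e x a * e x a = e x a)
    (hsa : ∀ x a, star (e x a) = e x a)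
    (hrow : ∀ x, ∑ a, e x a = 1)
    (hcol : ∀ a, ∑ x, e x a = 1)
    (u : Matrix (Fin n) (Fin n) A) (hu : u = Matrix.of e)
    (A' : Matrix (Fin n) (Fin n) ℂ)
    (hA' : ∀ i j k l, e i k * e j l ≠ 0 → A' i j = A' k l) :
    uᴴ * A'.map (algebraMap ℂ A) * u = A'.map (algebraMap ℂ A) ∧
    A'.map (algebraMap ℂ A) * u = u * A'.map (algebraMap ℂ A) :=
  fixed_matrix_commutes_with_quantum_permutation_general e hsa hrow hcol u hu A' hA'
end

section
/- Let A be a unital C*-algebra, u = (e_{x,a})_{x,a ∈ Fin n} a quantum permutation over A, and A' = (a_{i,j}) ∈ M_n(ℂ). If (A' ⊗ 1) u = u (A' ⊗ 1) in M_n(A), then for all i, j, k, l with e_{i,k} e_{j,l} ≠ 0 we have a_{i,j} = a_{k,l}. -/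
/-!
Projections summing to `1` are mutually orthogonal: if `p + q ≤ 1` then `q p q ≤ 0`, and
`q p q = (p q)⋆ (p q)` vanishes only if `p q` does. Hence the entries of a quantum permutation are
orthogonal along rows and columns. Multiplying the `(i, l)` entry of `(A' ⊗ 1) u = u (A' ⊗ 1)` by
`e_{i,k}` on the left and by `e_{j,l}` on the right leaves
`a_{i,j} e_{i,k} e_{j,l} = a_{k,l} e_{i,k} e_{j,l}`.
-/

open Matrix

namespace IsStarProjection

variable {A : Type*} [NormedRing A] [StarRing A] [CStarRing A] [PartialOrder A] [StarOrderedRing A]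

theorem mul_eq_zero_of_add_le_one {p q : A} (hp : IsStarProjection p) (hq : IsStarProjection q)
    (hpq : p + q ≤ 1) : p * q = 0 := by
  have hconj : q * p * q + q ≤ q := by
    simpa only [mul_add, add_mul, mul_one, hq.isIdempotentElem.eq, hq.isSelfAdjoint.star_eq,
      mul_assoc] using star_left_conjugate_le_conjugate hpq q
  have hle : star (p * q) * (p * q) ≤ 0 := by
    calc star (p * q) * (p * q) = q * p * q := by
          rw [star_mul, hp.isSelfAdjoint.star_eq, hq.isSelfAdjoint.star_eq, mul_assoc q,
            ← mul_assoc p, hp.isIdempotentElem.eq, mul_assoc]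
      _ ≤ 0 := by simpa using hconj
  exact (CStarRing.star_mul_self_eq_zero_iff _).mp (le_antisymm hle (star_mul_self_nonneg _))

theorem mul_eq_zero_of_sum_eq_one {ι : Type*} [Fintype ι] {p : ι → A}
    (hp : ∀ i, IsStarProjection (p i)) (hsum : ∑ i, p i = 1) {i j : ι} (hij : i ≠ j) :
    p i * p j = 0 := by
  classical
  refine mul_eq_zero_of_add_le_one (hp i) (hp j) ?_
  calc p i + p j = ∑ c ∈ {i, j}, p c := (Finset.sum_pair hij).symm
    _ ≤ ∑ c, p c := Finset.sum_le_univ_sum_of_nonneg fun c => (hp c).nonneg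
    _ = 1 := hsum

end IsStarProjection

structure IsQuantumPermutation {ι A : Type*} [Fintype ι] [Semiring A] [Star A]
    (e : ι → ι → A) : Prop where
  isStarProjection : ∀ x a, IsStarProjection (e x a)
  sum_row : ∀ x, ∑ a, e x a = 1
  sum_col : ∀ a, ∑ x, e x a = 1

namespace IsQuantumPermutation

variable {ι A : Type*} [Fintype ι] [NormedRing A] [StarRing A] [CStarRing A] [PartialOrder A]
  [StarOrderedRing A] {e : ι → ι → A}

theorem mul_eq_zero_of_ne_right (he : IsQuantumPermutation e) (x : ι) {a b : ι} (hab : a ≠ b) :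
    e x a * e x b = 0 :=
  IsStarProjection.mul_eq_zero_of_sum_eq_one (he.isStarProjection x) (he.sum_row x) hab

theorem mul_eq_zero_of_ne_left (he : IsQuantumPermutation e) (a : ι) {x y : ι} (hxy : x ≠ y) :
    e x a * e y a = 0 :=
  IsStarProjection.mul_eq_zero_of_sum_eq_one (fun x => he.isStarProjection x a) (he.sum_col a) hxy

end IsQuantumPermutation

theorem smul_mul_eq_of_map_mul_comm {R A ι : Type*} [CommSemiring R] [Semiring A] [Algebra R A]
    [Fintype ι] {e : ι → ι → A} (hidem : ∀ x a, IsIdempotentElem (e x a))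
    (hrow : ∀ x {a b}, a ≠ b → e x a * e x b = 0) (hcol : ∀ a {x y}, x ≠ y → e x a * e y a = 0)
    {M : Matrix ι ι R} (hcomm : M.map (algebraMap R A) * of e = of e * M.map (algebraMap R A))
    (i j k l : ι) : M i j • (e i k * e j l) = M k l • (e i k * e j l) := by
  have hentry : ∑ x, M i x • e x l = ∑ x, M x l • e i x := by
    simpa only [mul_apply, map_apply, of_apply, ← Algebra.commutes, ← Algebra.smul_def]
      using congrFun (congrFun hcomm i) l
  have hsandwich := congrArg (fun z => e i k * z * e j l) hentry
  simp only [Finset.mul_sum, Finset.sum_mul, mul_smul_comm, smul_mul_assoc] at hsandwich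
  rwa [Finset.sum_eq_single_of_mem j (Finset.mem_univ j), Finset.sum_eq_single_of_mem k
      (Finset.mem_univ k), mul_assoc, (hidem j l).eq, (hidem i k).eq] at hsandwich
  · intro x _ hxk
    rw [hrow i (Ne.symm hxk), zero_mul, smul_zero]
  · intro x _ hxj
    rw [mul_assoc, hcol l hxj, mul_zero, smul_zero]

open Matrix in
/-- Converse direction: if `(A'⊗1)u = u(A'⊗1)` for a quantum permutation `u = (e_{x,a})`,
then `a_{i,j} = a_{k,l}` whenever `e_{i,k} e_{j,l} ≠ 0`. -/
theorem commuting_matrix_entries_constant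
    {A : Type*} [NormedRing A] [StarRing A] [CStarRing A] [NormedAlgebra ℂ A]
    [StarModule ℂ A] [CompleteSpace A]
    {n : ℕ} (e : Fin n → Fin n → A)
    (hidem : ∀ x a, e x a * e x a = e x a)
    (hsa : ∀ x a, star (e x a) = e x a)
    (hrow : ∀ x, ∑ a, e x a = 1)
    (hcol : ∀ a, ∑ x, e x a = 1)
    (u : Matrix (Fin n) (Fin n) A) (hu : u = Matrix.of e)
    (A' : Matrix (Fin n) (Fin n) ℂ)
    (hcomm : A'.map (algebraMap ℂ A) * u = u * A'.map (algebraMap ℂ A)) :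
    ∀ i j k l, e i k * e j l ≠ 0 → A' i j = A' k l := by
  -- the order making `A` a star-ordered ring is not an instance: it is the spectral order
  let : CStarAlgebra A := ⟨⟩
  let := CStarAlgebra.spectralOrder A
  let := CStarAlgebra.spectralOrderedRing A
  have he : IsQuantumPermutation e := ⟨fun x a => ⟨hidem x a, hsa x a⟩, hrow, hcol⟩
  intro i j k l hne
  subst hu
  exact smul_left_injective ℂ hne <| smul_mul_eq_of_map_mul_comm hidem
    he.mul_eq_zero_of_ne_right he.mul_eq_zero_of_ne_left hcomm i j k l
end

section
/- Let A be a unital C*-algebra with a faithful tracial state τ, and let {e_{x,a} : x, a ∈ Fin n} be projections in A with ∑_a e_{x,a} = 1 for all x, such that the density p(a,b|x,y) := τ(e_{x,a} e_{y,b}) is bisynchronous (in particular τ(e_{x,a} e_{y,a}) = 0 for x ≠ y). Then e_{x,a} e_{y,a} = 0 for x ≠ y, and hence (e_{x,a}) is a quantum permutation. -/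
/-!
Since `τ` is tracial, `τ(p q) = τ(q p q) = τ((p q)^* (p q))` for projections `p, q`, so faithfulness
turns the vanishing of `τ(e_{x,a} e_{y,a})` into `e_{x,a} e_{y,a} = 0`. Each column is then a family
of orthogonal projections, so its sum `s_a` is a projection. Summing the rows gives
`∑_a s_a = n`, i.e. `∑_a (1 - s_a) = 0`; the `1 - s_a` are projections, so their traces are
nonnegative and hence all zero, and faithfulness gives `s_a = 1`.
-/

section Trace

open ComplexOrder

variable {R : Type*} [Ring R] [StarRing R] [Module ℂ R] (τ : R →ₗ[ℂ] ℂ)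

theorem IsStarProjection.trace_nonneg (hτpos : ∀ a : R, 0 ≤ τ (star a * a)) {p : R}
    (hp : IsStarProjection p) : 0 ≤ τ p := by
  simpa [hp.isSelfAdjoint.star_eq, hp.isIdempotentElem.eq] using hτpos p

theorem IsStarProjection.eq_zero_of_trace_eq_zero
    (hτfaith : ∀ a : R, τ (star a * a) = 0 → a = 0) {p : R} (hp : IsStarProjection p)
    (h : τ p = 0) : p = 0 :=
  hτfaith p <| by rwa [hp.isSelfAdjoint.star_eq, hp.isIdempotentElem.eq]

theorem IsStarProjection.mul_eq_zero_of_trace_mul_eq_zero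
    (hτtr : ∀ a b : R, τ (a * b) = τ (b * a)) (hτfaith : ∀ a : R, τ (star a * a) = 0 → a = 0)
    {p q : R} (hp : IsStarProjection p) (hq : IsStarProjection q) (h : τ (p * q) = 0) :
    p * q = 0 := by
  refine hτfaith _ ?_
  calc τ (star (p * q) * (p * q)) = τ (q * (p * q)) := by
        rw [star_mul, hp.isSelfAdjoint.star_eq, hq.isSelfAdjoint.star_eq, mul_assoc,
          ← mul_assoc p, hp.isIdempotentElem.eq]
    _ = τ (p * q) := by rw [hτtr, mul_assoc, hq.isIdempotentElem.eq]
    _ = 0 := h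

theorem IsStarProjection.eq_one_of_sum_eq_card_smul_one
    (hτpos : ∀ a : R, 0 ≤ τ (star a * a)) (hτfaith : ∀ a : R, τ (star a * a) = 0 → a = 0)
    {ι : Type*} [Fintype ι] {q : ι → R} (hq : ∀ i, IsStarProjection (q i))
    (hsum : ∑ i, q i = Fintype.card ι • (1 : R)) (i : ι) : q i = 1 := by
  have hcompl : ∑ j, (1 - q j) = 0 := by
    rw [Finset.sum_sub_distrib, hsum, Finset.sum_const, Finset.card_univ, sub_self]
  have htrace : ∑ j, τ (1 - q j) = 0 := by rw [← map_sum, hcompl, map_zero]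
  have hi : τ (1 - q i) = 0 :=
    (Finset.sum_eq_zero_iff_of_nonneg fun j _ ↦ (hq j).one_sub.trace_nonneg τ hτpos).mp htrace i
      (Finset.mem_univ i)
  exact (sub_eq_zero.mp ((hq i).one_sub.eq_zero_of_trace_eq_zero τ hτfaith hi)).symm

end Trace

theorem OrthogonalIdempotents.isStarProjection_sum {R ι : Type*} [Semiring R] [StarRing R]
    {e : ι → R} (he : OrthogonalIdempotents e) (hsa : ∀ i, IsSelfAdjoint (e i)) (s : Finset ι) :
    IsStarProjection (∑ i ∈ s, e i) :=
  ⟨he.isIdempotentElem_sum, isSelfAdjoint_sum s fun i _ ↦ hsa i⟩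

open ComplexOrder in
theorem bisynchronous_trace_forces_quantum_permutation_general
    {A : Type*} [NormedRing A] [StarRing A] [NormedAlgebra ℂ A]
    (τ : A →ₗ[ℂ] ℂ)
    (hτtr : ∀ a b : A, τ (a * b) = τ (b * a))
    (hτpos : ∀ a : A, 0 ≤ τ (star a * a))
    (hτfaith : ∀ a : A, τ (star a * a) = 0 → a = 0)
    {n : ℕ} (e : Fin n → Fin n → A)
    (hidem : ∀ x a, e x a * e x a = e x a)
    (hsa : ∀ x a, star (e x a) = e x a)
    (hrow : ∀ x, ∑ a, e x a = 1)
    (hbisync : ∀ x y a, x ≠ y → τ (e x a * e y a) = 0) :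
    (∀ x y a, x ≠ y → e x a * e y a = 0) ∧ (∀ a, ∑ x, e x a = 1) := by
  have hproj : ∀ x a, IsStarProjection (e x a) := fun x a ↦ ⟨hidem x a, hsa x a⟩
  have hortho : ∀ x y a, x ≠ y → e x a * e y a = 0 := fun x y a hxy ↦
    (hproj x a).mul_eq_zero_of_trace_mul_eq_zero τ hτtr hτfaith (hproj y a) (hbisync x y a hxy)
  refine ⟨hortho, IsStarProjection.eq_one_of_sum_eq_card_smul_one τ hτpos hτfaith
    (fun a ↦ ?_) ?_⟩
  · exact OrthogonalIdempotents.isStarProjection_sum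
      ⟨fun x ↦ hidem x a, fun x y hxy ↦ hortho x y a hxy⟩ (fun x ↦ hsa x a) _
  · rw [Finset.sum_comm]
    simp [hrow]

open ComplexOrder in
/-- If `τ` is a faithful tracial state and the density `p(a,b|x,y) = τ(e_{x,a} e_{y,b})`
is bisynchronous (in particular `τ(e_{x,a} e_{y,a}) = 0` for `x ≠ y`), then
`e_{x,a} e_{y,a} = 0` for `x ≠ y` and the columns sum to 1, so `(e_{x,a})` is a
quantum permutation. -/
theorem bisynchronous_trace_forces_quantum_permutation
    {A : Type*} [NormedRing A] [StarRing A] [CStarRing A] [NormedAlgebra ℂ A]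
    [StarModule ℂ A] [CompleteSpace A]
    (τ : A →ₗ[ℂ] ℂ) (hτ1 : τ 1 = 1)
    (hτtr : ∀ a b : A, τ (a * b) = τ (b * a))
    (hτpos : ∀ a : A, 0 ≤ τ (star a * a))
    (hτfaith : ∀ a : A, τ (star a * a) = 0 → a = 0)
    {n : ℕ} (e : Fin n → Fin n → A)
    (hidem : ∀ x a, e x a * e x a = e x a)
    (hsa : ∀ x a, star (e x a) = e x a)
    (hrow : ∀ x, ∑ a, e x a = 1)
    (hbisync : ∀ x y a, x ≠ y → τ (e x a * e y a) = 0) :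
    (∀ x y a, x ≠ y → e x a * e y a = 0) ∧ (∀ a, ∑ x, e x a = 1) :=
  bisynchronous_trace_forces_quantum_permutation_general τ hτtr hτpos hτfaith e hidem hsa hrow
    hbisync
end
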